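/- With N_n(x,a) as defined (F-weighted recursive matrix) and for 1 ≤ m ≤ n−1, 1 ≤ k ≤ n−m, the explicitly defined row vector X_n^{m,k}(x,a) is a left eigenvector: X_n^{m,k}(x,a) · N_n(x,a) = (x − a q^{k−1}[m]_q) · X_n^{m,k}(x,a). -/

import Mathlib

noncomputable section

open Finset

/-- `Nsz n = (n+1)(n+2)/2`, the size of the matrix `N_n(x,a)`. -/
def Nsz : ℕ → ℕ
  | 0 => 1
  | n + 1 => Nsz n + (n + 2)

theorem Nsz_pos (n : ℕ) : 0 < Nsz n := by
  cases n <;> simp [Nsz]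

variable {K : Type*} [Field K]

/-- The `q`-integer `[m]_q = 1 + q + ⋯ + q^{m-1}`. -/
def qint (q : K) (m : ℕ) : K := ∑ j ∈ Finset.range m, q ^ j

/-- The `q`-factorial `[m]_q!`. -/
def qfact (q : K) (m : ℕ) : K := ∏ j ∈ Finset.Icc 1 m, qint q j

/-- `F`-factorial `F_m! = F_1 F_2 ⋯ F_m` (equal to `1` for `m = 0`). -/
def Ffact (F : ℕ → K) (m : ℕ) : K := ∏ j ∈ Finset.Icc 1 m, F j

/-- The lower-right block `N̂_n` of `N_{n+1}(x,a)`: the `(n+2)×(n+2)` matrix with (1-based)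
entries `x δ_{ij} - a q^{i-1} [(n+2)-i]_q (δ_{ij} + δ_{i+1,j})`. -/
def Nhat (x a q : K) (n : ℕ) : Matrix (Fin (n + 2)) (Fin (n + 2)) K := fun i j =>
  x * (if (i : ℕ) = (j : ℕ) then 1 else 0) -
    a * q ^ (i : ℕ) * qint q (n + 1 - (i : ℕ)) *
      ((if (i : ℕ) = (j : ℕ) then 1 else 0) + (if (i : ℕ) + 1 = (j : ℕ) then 1 else 0))

/-- The upper-right block `N̄_n` of `N_{n+1}(x,a)`: only its last `n+1` rows are nonzero,
and those form the `(n+1)×(n+2)` matrix with (1-based) entries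
`-a F_{n+1} (δ_{ij} + δ_{i+1,j})`. -/
def Nbar (a : K) (F : ℕ → K) (n : ℕ) : Matrix (Fin (Nsz n)) (Fin (n + 2)) K := fun r j =>
  if Nsz n ≤ (r : ℕ) + (n + 1) then
    -a * F (n + 1) *
      ((if (r : ℕ) - (Nsz n - (n + 1)) = (j : ℕ) then 1 else 0) +
        (if (r : ℕ) - (Nsz n - (n + 1)) + 1 = (j : ℕ) then 1 else 0))
  else 0

/-- The recursively defined matrix `N_n(x,a)`. -/
def Nmat (x a q : K) (F : ℕ → K) : (n : ℕ) → Matrix (Fin (Nsz n)) (Fin (Nsz n)) K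
  | 0 => fun _ _ => x
  | n + 1 => fun p r =>
      Matrix.fromBlocks (Nmat x a q F n) (Nbar a F n) 0 (Nhat x a q n)
        (finSumFinEquiv.symm p) (finSumFinEquiv.symm r)

/-- `Ṅ_n(x,a)`: the matrix `N_n(x,a)` with its last row and first column deleted. -/
def Ndot (x a q : K) (F : ℕ → K) (n : ℕ) :
    Matrix (Fin (Nsz n - 1)) (Fin (Nsz n - 1)) K := fun i j =>
  Nmat x a q F n ⟨(i : ℕ), lt_of_lt_of_le i.isLt (Nat.sub_le _ _)⟩
    ⟨(j : ℕ) + 1, by have := j.isLt; have := Nsz_pos n; omega⟩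

/-- The `F`-binomial coefficient, vanishing out of range. -/
def Fbinom (F : ℕ → K) (n k : ℕ) : K :=
  if k ≤ n then Ffact F n / (Ffact F k * Ffact F (n - k)) else 0

/-- The `q`-binomial coefficient, vanishing out of range. -/
def qbinom (q : K) (n k : ℕ) : K :=
  if k ≤ n then qfact q n / (qfact q k * qfact q (n - k)) else 0

/-- The entry of the vector `X_n^{m,k}(x,a)` in position `(i(i-1)/2 + j)` (1-based,
`1 ≤ i`, `1 ≤ j ≤ i`):
`(-1)^{i+m+k} a q^{-(m+k-1)(i-m-k) + C(j-k,2)} (F_{i-m-k}!/[i-m-k]_q!)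
  · (i-1 choose m+k-1)_F · [m choose j-k]_q`,
with the conventions that `F_r! = [r]_q! = 1` for `r ≤ 0` and binomial coefficients
vanish for out-of-range (in particular, negative) indices. -/
def Xentry (a q : K) (F : ℕ → K) (m k i j : ℕ) : K :=
  if j < k ∨ i < m + k then 0
  else
    (-1 : K) ^ (i + m + k) * a *
      q ^ ((((j - k).choose 2 : ℕ) : ℤ) - ((m : ℤ) + k - 1) * ((i : ℤ) - m - k)) *
      (Ffact F (i - m - k) / qfact q (i - m - k)) *
      Fbinom F (i - 1) (m + k - 1) * qbinom q m (j - k)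

/-- The vector `X_n^{m,k}(x,a)`, laid out so that its last `n+1` entries correspond to
row index `i = n+1` and column indices `j = 1, …, n+1`. -/
def Xvec (a q : K) (F : ℕ → K) (m k : ℕ) : (n : ℕ) → Fin (Nsz n) → K
  | 0 => fun _ => Xentry a q F m k 1 1
  | n + 1 => fun p =>
      Sum.elim (Xvec a q F m k n)
        (fun j : Fin (n + 2) => Xentry a q F m k (n + 2) ((j : ℕ) + 1))
        (finSumFinEquiv.symm p)

/-!
Write the entry of `X` in row `i = m + k + s` and column `j = k + t` as
`R_s · q^{C(t,2)} [m choose t]_q`. The row factor satisfies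
`F_{m+k+s} R_s = -q^{m+k-1} [s+1]_q R_{s+1}`, so the contribution of row block `i - 1` to column
`j` of `X N`, which passes through the `F`-entries of `N`, is `-q^{m+k-1} [s]_q` times that of
block `i`. The eigenvector equation at `(i, j)` then reduces to the `q`-Pascal rule
`[t+1]_q [m choose t+1]_q = [m-t]_q [m choose t]_q` and `[u+s]_q = [u]_q + q^u [s]_q`.
As `N_n` is block upper triangular with upper-left block `N_{n-1}`, induction on `n` finishes.
-/

lemma qint_add (q : K) (u s : ℕ) : qint q (u + s) = qint q u + q ^ u * qint q s := by
  simp only [qint, Finset.sum_range_add, pow_add, Finset.mul_sum]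

lemma qfact_succ (q : K) (s : ℕ) : qfact q (s + 1) = qfact q s * qint q (s + 1) :=
  Finset.prod_Icc_succ_top (by omega) _

lemma Ffact_succ (F : ℕ → K) (s : ℕ) : Ffact F (s + 1) = Ffact F s * F (s + 1) :=
  Finset.prod_Icc_succ_top (by omega) _

lemma qfact_ne_zero {q : K} (hqi : ∀ r : ℕ, 1 ≤ r → qint q r ≠ 0) (s : ℕ) : qfact q s ≠ 0 :=
  Finset.prod_ne_zero_iff.mpr fun r hr => hqi r (Finset.mem_Icc.mp hr).1

lemma Ffact_ne_zero {F : ℕ → K} (hF : ∀ r : ℕ, 1 ≤ r → F r ≠ 0) (s : ℕ) : Ffact F s ≠ 0 :=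
  Finset.prod_ne_zero_iff.mpr fun r hr => hF r (Finset.mem_Icc.mp hr).1

lemma qbinom_of_lt (q : K) {m t : ℕ} (h : m < t) : qbinom q m t = 0 :=
  if_neg (by omega)

lemma qint_succ_mul_qbinom_succ {q : K} (hqi : ∀ r : ℕ, 1 ≤ r → qint q r ≠ 0) (m t : ℕ) :
    qint q (t + 1) * qbinom q m (t + 1) = qint q (m - t) * qbinom q m t := by
  rcases lt_or_ge t m with htm | hmt
  · obtain ⟨u, rfl⟩ : ∃ u, m = t + 1 + u := ⟨m - (t + 1), by omega⟩
    rw [qbinom, if_pos (by omega), qbinom, if_pos (by omega),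
      show t + 1 + u - (t + 1) = u by omega, show t + 1 + u - t = u + 1 by omega,
      qfact_succ q t, qfact_succ q u]
    have := qfact_ne_zero hqi t
    have := qfact_ne_zero hqi u
    have := hqi (t + 1) (by omega)
    have := hqi (u + 1) (by omega)
    field_simp
  · rw [qbinom_of_lt q (by omega : m < t + 1), show m - t = 0 by omega]
    simp [qint]

/-- The coefficient `q^{C(t,2)} [m choose t]_q` of `z^t` in `∏_{i<m} (1 + q^i z)`. -/
def gaussCoeff (q : K) (m t : ℕ) : K := q ^ t.choose 2 * qbinom q m t

lemma qint_succ_mul_gaussCoeff_succ {q : K} (hqi : ∀ r : ℕ, 1 ≤ r → qint q r ≠ 0) (m t : ℕ) :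
    qint q (t + 1) * gaussCoeff q m (t + 1) = q ^ t * qint q (m - t) * gaussCoeff q m t := by
  have h := qint_succ_mul_qbinom_succ hqi m t
  rw [gaussCoeff, gaussCoeff, Nat.choose_succ_succ', Nat.choose_one_right, pow_add]
  linear_combination q ^ t * q ^ t.choose 2 * h

lemma gaussCoeff_row {q : K} (hqi : ∀ r : ℕ, 1 ≤ r → qint q r ≠ 0) (m s t : ℕ) :
    (q ^ (t + 1) * qint q (m + s - (t + 1)) - q ^ m * qint q s) * gaussCoeff q m (t + 1) +
        (q ^ t * qint q (m + s - t) - q ^ m * qint q s) * gaussCoeff q m t =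
      qint q m * gaussCoeff q m (t + 1) := by
  rcases lt_trichotomy t m with htm | rfl | hmt
  · obtain ⟨u, rfl⟩ : ∃ u, m = t + 1 + u := ⟨m - (t + 1), by omega⟩
    have h := qint_succ_mul_gaussCoeff_succ hqi (t + 1 + u) t
    rw [show t + 1 + u - t = u + 1 by omega] at h
    rw [show t + 1 + u + s - (t + 1) = u + s by omega,
      show t + 1 + u + s - t = (u + 1) + s by omega,
      qint_add q u s, qint_add q (u + 1) s, qint_add q (t + 1) u]
    linear_combination -h
  · rw [gaussCoeff, qbinom_of_lt q (Nat.lt_succ_self t), show t + s - t = s by omega]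
    ring
  · rw [gaussCoeff, gaussCoeff, qbinom_of_lt q hmt, qbinom_of_lt q (by omega : m < t + 1)]
    ring

def rowCoeff (a q : K) (F : ℕ → K) (p s : ℕ) : K :=
  (-1) ^ s * a * Ffact F (p + s) / (q ^ (p * s) * Ffact F p * qfact q s)

lemma F_mul_rowCoeff (a : K) {q : K} (F : ℕ → K) (hq : q ≠ 0)
    (hqi : ∀ r : ℕ, 1 ≤ r → qint q r ≠ 0) (p s : ℕ) :
    F (p + s + 1) * rowCoeff a q F p s = -(q ^ p * qint q (s + 1) * rowCoeff a q F p (s + 1)) := by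
  have := pow_ne_zero p hq
  have := hqi (s + 1) (by omega)
  rw [rowCoeff, rowCoeff, ← add_assoc, Ffact_succ, qfact_succ, mul_add, mul_one, pow_add]
  field_simp
  ring

section Xentry

variable {a q : K} {F : ℕ → K} {m k : ℕ}

lemma Xentry_of_lt_col {i j : ℕ} (h : j < k) : Xentry a q F m k i j = 0 :=
  if_pos (Or.inl h)

lemma Xentry_of_lt_row {i j : ℕ} (h : i < m + k) : Xentry a q F m k i j = 0 :=
  if_pos (Or.inr h)

lemma Xentry_of_row_lt_col {i j : ℕ} (h : i < j) : Xentry a q F m k i j = 0 := by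
  unfold Xentry
  split_ifs with h'
  · rfl
  · rw [qbinom_of_lt q (by omega), mul_zero]

lemma Xentry_eq_rowCoeff_mul (hq : q ≠ 0) (hF : ∀ r : ℕ, 1 ≤ r → F r ≠ 0) (hk : 1 ≤ k)
    (s t : ℕ) :
    Xentry a q F m k (m + k + s) (k + t) = rowCoeff a q F (m + k - 1) s * gaussCoeff q m t := by
  obtain ⟨p, hp⟩ : ∃ p, m + k = p + 1 := ⟨m + k - 1, by omega⟩
  have hsign : (-1 : K) ^ (m + k + s + m + k) = (-1) ^ s := by
    rw [show m + k + s + m + k = s + 2 * (m + k) by omega, pow_add, pow_mul, neg_one_sq,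
      one_pow, mul_one]
  have hexp : ((t.choose 2 : ℕ) : ℤ) - ((m : ℤ) + k - 1) * (((m + k + s : ℕ) : ℤ) - m - k) =
      (t.choose 2 : ℕ) - (p * s : ℕ) := by
    have hp' : (m : ℤ) + k = p + 1 := by exact_mod_cast hp
    push_cast
    linear_combination (-(s : ℤ)) * hp'
  have := Ffact_ne_zero hF s
  rw [Xentry, if_neg (by omega), hsign, show k + t - k = t by omega, hexp, zpow_sub₀ hq,
    zpow_natCast, zpow_natCast, show m + k + s - m - k = s by omega, show m + k - 1 = p by omega,
    show m + k + s - 1 = p + s by omega, Fbinom, if_pos (by omega), show p + s - p = s by omega,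
    rowCoeff, gaussCoeff]
  field_simp

lemma F_mul_Xentry (hq : q ≠ 0) (hqi : ∀ r : ℕ, 1 ≤ r → qint q r ≠ 0)
    (hF : ∀ r : ℕ, 1 ≤ r → F r ≠ 0) (hk : 1 ≤ k) (s j : ℕ) :
    F (m + k - 1 + s) * Xentry a q F m k (m + k - 1 + s) j =
      -(q ^ (m + k - 1) * qint q s * Xentry a q F m k (m + k + s) j) := by
  rcases lt_or_ge j k with hj | hj
  · rw [Xentry_of_lt_col hj, Xentry_of_lt_col hj]
    ring
  obtain ⟨t, rfl⟩ : ∃ t, j = k + t := ⟨j - k, by omega⟩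
  cases s with
  | zero =>
    rw [Xentry_of_lt_row (by omega : m + k - 1 + 0 < m + k)]
    simp [qint]
  | succ s =>
    rw [show m + k - 1 + (s + 1) = m + k + s by omega, Xentry_eq_rowCoeff_mul hq hF hk,
      Xentry_eq_rowCoeff_mul hq hF hk]
    have h := F_mul_rowCoeff a F hq hqi (m + k - 1) s
    rw [show m + k - 1 + s + 1 = m + k + s by omega] at h
    linear_combination gaussCoeff q m t * h

lemma Xentry_same_row_recurrence (hq : q ≠ 0) (hqi : ∀ r : ℕ, 1 ≤ r → qint q r ≠ 0)
    (hF : ∀ r : ℕ, 1 ≤ r → F r ≠ 0) (hk : 1 ≤ k) (s c : ℕ) :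
    q ^ c * qint q (m + k - 1 + s - c) * Xentry a q F m k (m + k + s) (c + 1) +
        q ^ (c - 1) * qint q (m + k + s - c) * Xentry a q F m k (m + k + s) c -
        q ^ (m + k - 1) * qint q s *
          (Xentry a q F m k (m + k + s) (c + 1) + Xentry a q F m k (m + k + s) c) =
      q ^ (k - 1) * qint q m * Xentry a q F m k (m + k + s) (c + 1) := by
  rcases lt_or_ge (c + 1) k with hc | hc
  · rw [Xentry_of_lt_col hc, Xentry_of_lt_col (by omega : c < k)]
    ring
  obtain ⟨k, rfl⟩ : ∃ k', k = k' + 1 := ⟨k - 1, by omega⟩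
  rcases Nat.eq_or_lt_of_le hc with hc | hc
  · obtain rfl : c = k := by omega
    have h0 := Xentry_eq_rowCoeff_mul (a := a) (m := m) hq hF hk s 0
    rw [add_zero] at h0
    rw [Xentry_of_lt_col (Nat.lt_succ_self c), h0, show m + (c + 1) - 1 + s - c = m + s by omega,
      show c + 1 - 1 = c by omega, show m + (c + 1) - 1 = c + m by omega, qint_add q m s]
    ring
  obtain ⟨t, rfl⟩ : ∃ t, c = k + 1 + t := ⟨c - (k + 1), by omega⟩
  rw [show k + 1 + t + 1 = k + 1 + (t + 1) by omega, Xentry_eq_rowCoeff_mul hq hF hk,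
    Xentry_eq_rowCoeff_mul hq hF hk,
    show m + (k + 1) - 1 + s - (k + 1 + t) = m + s - (t + 1) by omega,
    show m + (k + 1) + s - (k + 1 + t) = m + s - t by omega, show k + 1 + t - 1 = k + t by omega,
    show m + (k + 1) - 1 = k + m by omega, show k + 1 - 1 = k by omega]
  linear_combination q ^ k * rowCoeff a q F (k + m) s * gaussCoeff_row hqi m s t

/-- The eigenvector equation at entry `(i + 1, c + 1)`. -/
lemma Xentry_recurrence (hq : q ≠ 0) (hqi : ∀ r : ℕ, 1 ≤ r → qint q r ≠ 0)
    (hF : ∀ r : ℕ, 1 ≤ r → F r ≠ 0) (hk : 1 ≤ k) (i c : ℕ) :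
    q ^ c * qint q (i - c) * Xentry a q F m k (i + 1) (c + 1) +
        q ^ (c - 1) * qint q (i + 1 - c) * Xentry a q F m k (i + 1) c +
        F i * (Xentry a q F m k i (c + 1) + Xentry a q F m k i c) =
      q ^ (k - 1) * qint q m * Xentry a q F m k (i + 1) (c + 1) := by
  rcases lt_or_ge i (m + k - 1) with hi | hi
  · simp only [Xentry_of_lt_row (by omega : i < m + k),
      Xentry_of_lt_row (by omega : i + 1 < m + k)]
    ring
  obtain ⟨s, rfl⟩ : ∃ s, i = m + k - 1 + s := ⟨i - (m + k - 1), by omega⟩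
  rw [mul_add, F_mul_Xentry hq hqi hF hk, F_mul_Xentry hq hqi hF hk,
    show m + k - 1 + s + 1 = m + k + s by omega]
  linear_combination Xentry_same_row_recurrence (a := a) (m := m) hq hqi hF hk s c

end Xentry

lemma sum_fin_mul_ite_eq (N : ℕ) (f : ℕ → K) (c : ℕ) :
    ∑ d : Fin N, f d * (if (d : ℕ) = c then 1 else 0) = if c < N then f c else 0 := by
  rw [Fin.sum_univ_eq_sum_range (fun d => f d * if d = c then 1 else 0)]
  simp

lemma sum_fin_mul_ite_succ_eq (N : ℕ) (f : ℕ → K) (c : ℕ) :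
    ∑ d : Fin N, f d * (if (d : ℕ) + 1 = c then 1 else 0) =
      if 1 ≤ c ∧ c ≤ N then f (c - 1) else 0 := by
  rw [Fin.sum_univ_eq_sum_range (fun d => f d * if d + 1 = c then 1 else 0)]
  rcases Nat.eq_zero_or_pos c with rfl | hc
  · simp
  · obtain ⟨c, rfl⟩ : ∃ c', c = c' + 1 := ⟨c - 1, by omega⟩
    simp only [Nat.add_right_cancel_iff, mul_ite, mul_one, mul_zero, Finset.sum_ite_eq',
      Finset.mem_range, Nat.add_sub_cancel]
    congr 1
    simp only [eq_iff_iff]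
    omega

lemma vecMul_Nhat (x a q : K) (n : ℕ) (g : ℕ → K) (hg : g 0 = 0) (c : Fin (n + 2)) :
    Matrix.vecMul (fun d : Fin (n + 2) => g (d + 1)) (Nhat x a q n) c =
      x * g (c + 1) - a * q ^ (c : ℕ) * qint q (n + 1 - c) * g (c + 1) -
        a * q ^ (c - 1 : ℕ) * qint q (n + 2 - c) * g c := by
  have hsplit : ∀ d : Fin (n + 2), g (d + 1) * Nhat x a q n d c =
      (x - a * q ^ (d : ℕ) * qint q (n + 1 - d)) * g (d + 1) * (if (d : ℕ) = c then 1 else 0) -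
        a * q ^ (d : ℕ) * qint q (n + 1 - d) * g (d + 1) * (if (d : ℕ) + 1 = c then 1 else 0) := by
    intro d
    rw [Nhat]
    ring
  simp only [Matrix.vecMul, dotProduct, hsplit, Finset.sum_sub_distrib]
  rw [sum_fin_mul_ite_eq (n + 2) (fun d => (x - a * q ^ d * qint q (n + 1 - d)) * g (d + 1)),
    sum_fin_mul_ite_succ_eq (n + 2) (fun d => a * q ^ d * qint q (n + 1 - d) * g (d + 1)),
    if_pos c.isLt]
  rcases Nat.eq_zero_or_pos (c : ℕ) with hc | hc
  · rw [if_neg (by omega), hc, hg]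
    ring
  · rw [if_pos ⟨hc, by omega⟩, Nat.sub_add_cancel hc, show n + 1 - (c - 1) = n + 2 - c by omega]
    ring

lemma succ_le_Nsz (n : ℕ) : n + 1 ≤ Nsz n := by
  cases n <;> simp [Nsz]

/-- The positions of the last row block of `N_n`, i.e. of the entries with `i = n + 1`. -/
def lastBlock (n : ℕ) (d : Fin (n + 1)) : Fin (Nsz n) :=
  ⟨Nsz n - (n + 1) + d, by have := succ_le_Nsz n; omega⟩

lemma lastBlock_injective (n : ℕ) : Function.Injective (lastBlock n) := by
  intro d e h
  simpa [lastBlock, Fin.ext_iff] using h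

lemma Nbar_lastBlock (a : K) (F : ℕ → K) (n : ℕ) (d : Fin (n + 1)) (c : Fin (n + 2)) :
    Nbar a F n (lastBlock n d) c =
      -a * F (n + 1) * ((if (d : ℕ) = c then 1 else 0) + (if (d : ℕ) + 1 = c then 1 else 0)) := by
  rw [Nbar, if_pos (by simp only [lastBlock]; omega)]
  simp [lastBlock]

lemma Nbar_of_notMem_range (a : K) (F : ℕ → K) (n : ℕ) {r : Fin (Nsz n)}
    (hr : r ∉ Set.range (lastBlock n)) (c : Fin (n + 2)) : Nbar a F n r c = 0 := by
  refine if_neg fun h => hr ⟨⟨r - (Nsz n - (n + 1)), by omega⟩, ?_⟩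
  ext
  simp only [lastBlock]
  have := succ_le_Nsz n
  omega

lemma vecMul_Nbar (a : K) (F : ℕ → K) (n : ℕ) (v : Fin (Nsz n) → K) (g : ℕ → K)
    (hv : ∀ d, v (lastBlock n d) = g (d + 1)) (hg0 : g 0 = 0) (hg : g (n + 2) = 0)
    (c : Fin (n + 2)) :
    Matrix.vecMul v (Nbar a F n) c = -a * F (n + 1) * (g (c + 1) + g c) := by
  have hsum : Matrix.vecMul v (Nbar a F n) c =
      ∑ d : Fin (n + 1), g (d + 1) * Nbar a F n (lastBlock n d) c := by
    refine (Fintype.sum_of_injective _ (lastBlock_injective n) _ _ (fun r hr => ?_)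
      (fun d => by rw [hv])).symm
    show v r * Nbar a F n r c = 0
    rw [Nbar_of_notMem_range a F n hr, mul_zero]
  simp only [hsum, Nbar_lastBlock, mul_add, Finset.sum_add_distrib, ← mul_assoc]
  rw [sum_fin_mul_ite_eq (n + 1) (fun d => g (d + 1) * (-a) * F (n + 1)),
    sum_fin_mul_ite_succ_eq (n + 1) (fun d => g (d + 1) * (-a) * F (n + 1))]
  rcases Nat.eq_zero_or_pos (c : ℕ) with hc | hc
  · rw [if_pos (by omega), if_neg (by omega), hc, hg0]
    ring
  rcases lt_or_ge (c : ℕ) (n + 1) with hcn | hcn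
  · rw [if_pos hcn, if_pos ⟨hc, by omega⟩, Nat.sub_add_cancel hc]
    ring
  · rw [if_neg (by omega), if_pos ⟨hc, by omega⟩, Nat.sub_add_cancel hc,
      show (c : ℕ) + 1 = n + 2 by omega, hg]
    ring

lemma Xvec_lastBlock (a q : K) (F : ℕ → K) (m k n : ℕ) (d : Fin (n + 1)) :
    Xvec a q F m k n (lastBlock n d) = Xentry a q F m k (n + 1) (d + 1) := by
  cases n with
  | zero =>
    rw [Fin.fin_one_eq_zero d]
    rfl
  | succ n =>
    have : lastBlock (n + 1) d = finSumFinEquiv (Sum.inr d) := by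
      ext
      simp [lastBlock, Nsz]
    rw [this]
    simp [Xvec]

lemma Xvec_succ_apply (a q : K) (F : ℕ → K) (m k n : ℕ) (p : Fin (Nsz (n + 1))) :
    Xvec a q F m k (n + 1) p =
      Sum.elim (Xvec a q F m k n) (fun d : Fin (n + 2) => Xentry a q F m k (n + 2) (d + 1))
        (finSumFinEquiv.symm p) :=
  rfl

lemma Xvec_succ_comp_finSumFinEquiv (a q : K) (F : ℕ → K) (m k n : ℕ) :
    (fun z => Xvec a q F m k (n + 1) (finSumFinEquiv z)) =
      Sum.elim (Xvec a q F m k n) (fun d : Fin (n + 2) => Xentry a q F m k (n + 2) (d + 1)) := by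
  ext z
  exact congrArg _ (Equiv.symm_apply_apply _ z)

lemma vecMul_Nmat_succ_apply (x a q : K) (F : ℕ → K) (n : ℕ) (v : Fin (Nsz (n + 1)) → K)
    (p : Fin (Nsz (n + 1))) :
    Matrix.vecMul v (Nmat x a q F (n + 1)) p =
      Matrix.vecMul (fun z => v (finSumFinEquiv z))
        (Matrix.fromBlocks (Nmat x a q F n) (Nbar a F n) 0 (Nhat x a q n))
        (finSumFinEquiv.symm p) :=
  congrFun (Matrix.submatrix_vecMul_equiv _ v finSumFinEquiv.symm finSumFinEquiv.symm) p

lemma vecMul_Xvec_Nmat_zero {a q : K} {F : ℕ → K} {m k : ℕ} (x : K) (hq : q ≠ 0)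
    (hqi : ∀ r : ℕ, 1 ≤ r → qint q r ≠ 0) (hF : ∀ r : ℕ, 1 ≤ r → F r ≠ 0) (hk : 1 ≤ k) :
    Matrix.vecMul (Xvec a q F m k 0) (Nmat x a q F 0) =
      (x - a * q ^ (k - 1) * qint q m) • Xvec a q F m k 0 := by
  -- the recurrence at `i = c = 0` says `q^{k-1} [m]_q X_{1,1} = 0`
  have h := Xentry_recurrence (a := a) (m := m) hq hqi hF hk 0 0
  simp only [Xentry_of_lt_row (by omega : 0 < m + k), Xentry_of_lt_col (by omega : 0 < k),
    Nat.sub_self, zero_add, show qint q 0 = 0 from Finset.sum_range_zero _] at h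
  ext p
  show ∑ _r : Fin 1, Xentry a q F m k 1 1 * x =
    (x - a * q ^ (k - 1) * qint q m) * Xentry a q F m k 1 1
  rw [Fin.sum_univ_one]
  linear_combination -a * h

lemma vecMul_Xvec_Nmat_succ {a q : K} {F : ℕ → K} {m k : ℕ} (x : K) (hq : q ≠ 0)
    (hqi : ∀ r : ℕ, 1 ≤ r → qint q r ≠ 0) (hF : ∀ r : ℕ, 1 ≤ r → F r ≠ 0) (hk : 1 ≤ k)
    {n : ℕ} (ih : Matrix.vecMul (Xvec a q F m k n) (Nmat x a q F n) =
      (x - a * q ^ (k - 1) * qint q m) • Xvec a q F m k n) :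
    Matrix.vecMul (Xvec a q F m k (n + 1)) (Nmat x a q F (n + 1)) =
      (x - a * q ^ (k - 1) * qint q m) • Xvec a q F m k (n + 1) := by
  ext p
  rw [vecMul_Nmat_succ_apply, Xvec_succ_comp_finSumFinEquiv, Matrix.vecMul_fromBlocks,
    Pi.smul_apply, smul_eq_mul, Xvec_succ_apply]
  rcases finSumFinEquiv.symm p with r | c
  · simp [ih]
  · simp only [Sum.elim_inr, Sum.elim_comp_inl, Sum.elim_comp_inr, Pi.add_apply]
    rw [vecMul_Nbar a F n _ (Xentry a q F m k (n + 1)) (Xvec_lastBlock a q F m k n)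
        (Xentry_of_lt_col (by omega)) (Xentry_of_row_lt_col (by omega)),
      vecMul_Nhat x a q n _ (Xentry_of_lt_col (by omega))]
    linear_combination (-a) * Xentry_recurrence (a := a) (m := m) hq hqi hF hk (n + 1) c

theorem stmt18_general {K : Type*} [Field K] (x a q : K) (F : ℕ → K)
    (hq : q ≠ 0) (hqi : ∀ r : ℕ, 1 ≤ r → qint q r ≠ 0) (hF : ∀ r : ℕ, 1 ≤ r → F r ≠ 0)
    (n m k : ℕ) (hk : 1 ≤ k) :
    Matrix.vecMul (Xvec a q F m k n) (Nmat x a q F n) =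
      (x - a * q ^ (k - 1) * qint q m) • Xvec a q F m k n := by
  induction n with
  | zero => exact vecMul_Xvec_Nmat_zero x hq hqi hF hk
  | succ n ih => exact vecMul_Xvec_Nmat_succ x hq hqi hF hk ih

/-- For `1 ≤ m ≤ n-1` and `1 ≤ k ≤ n-m`, the vector `X_n^{m,k}(x,a)` is a left eigenvector
of `N_n(x,a)`: `X_n^{m,k}(x,a) · N_n(x,a) = (x - a q^{k-1} [m]_q) X_n^{m,k}(x,a)`. -/
theorem stmt18 {K : Type*} [Field K] (x a q : K) (F : ℕ → K)
    (hq : q ≠ 0) (hqi : ∀ r : ℕ, 1 ≤ r → qint q r ≠ 0) (hF : ∀ r : ℕ, 1 ≤ r → F r ≠ 0)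
    (n m k : ℕ) (hm : 1 ≤ m) (hk : 1 ≤ k) (hmk : m + k ≤ n) :
    Matrix.vecMul (Xvec a q F m k n) (Nmat x a q F n) =
      (x - a * q ^ (k - 1) * qint q m) • Xvec a q F m k n :=
  stmt18_general x a q F hq hqi hF n m k hk
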